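/- Let c be a copula density on [0,1]². Then the third Blest measure η = 6 ∫₀¹∫₀¹ u² v² c(u,v) du dv − 1/5 satisfies 0 ≤ η ≤ 1. -/

import Mathlib

open MeasureTheory Set

/-- The unit square `[0,1]² ⊆ ℝ²`. -/
def unitSquare : Set (ℝ × ℝ) := Icc (0:ℝ) 1 ×ˢ Icc (0:ℝ) 1

/-- A copula density: a nonnegative measurable function on `[0,1]²` integrating to `1`
whose two marginal densities are both the uniform density on `[0,1]`. -/
def IsCopulaDensity (c : ℝ → ℝ → ℝ) : Prop :=
  Measurable (Function.uncurry c) ∧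
  (∀ u ∈ Icc (0:ℝ) 1, ∀ v ∈ Icc (0:ℝ) 1, 0 ≤ c u v) ∧
  (∫ p in unitSquare, c p.1 p.2 = 1) ∧
  (∀ᵐ u ∂(volume.restrict (Icc (0:ℝ) 1)), ∫ v in Icc (0:ℝ) 1, c u v = 1) ∧
  (∀ᵐ v ∂(volume.restrict (Icc (0:ℝ) 1)), ∫ u in Icc (0:ℝ) 1, c u v = 1)

/-!
Minimising or maximising `∫ u²v² c` over copula densities is an optimal transport problem
between two uniform marginals, so it suffices to sandwich `u²v²` between separable functions
`φ(u) + φ(v)`: integrating against `c` turns these into `2 ∫₀¹ φ`. The upper bound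
`u²v² ≤ (u⁴ + v⁴)/2` is AM-GM and is attained on the diagonal (comonotone copula); the lower bound
uses a potential whose sum touches `u²v²` on the antidiagonal `v = 1 - u` (countermonotone copula).
-/

lemma measurableSet_unitSquare : MeasurableSet unitSquare :=
  measurableSet_Icc.prod measurableSet_Icc

lemma isCompact_unitSquare : IsCompact unitSquare :=
  isCompact_Icc.prod isCompact_Icc

lemma volume_restrict_unitSquare :
    volume.restrict unitSquare =
      (volume.restrict (Icc (0 : ℝ) 1)).prod (volume.restrict (Icc (0 : ℝ) 1)) := by
  rw [Measure.prod_restrict, unitSquare, Measure.volume_eq_prod]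

lemma continuousOn_unitSquare_fst {φ : ℝ → ℝ} (hφ : ContinuousOn φ (Icc 0 1)) :
    ContinuousOn (fun p : ℝ × ℝ => φ p.1) unitSquare :=
  hφ.comp continuousOn_fst fun _ hp => hp.1

lemma continuousOn_unitSquare_snd {ψ : ℝ → ℝ} (hψ : ContinuousOn ψ (Icc 0 1)) :
    ContinuousOn (fun p : ℝ × ℝ => ψ p.2) unitSquare :=
  hψ.comp continuousOn_snd fun _ hp => hp.2

namespace IsCopulaDensity

variable {c : ℝ → ℝ → ℝ}

lemma integrableOn (hc : IsCopulaDensity c) :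
    IntegrableOn (fun p : ℝ × ℝ => c p.1 p.2) unitSquare := by
  by_contra h
  have h_one := hc.2.2.1
  rw [integral_undef h] at h_one
  exact zero_ne_one h_one

lemma integrableOn_mul (hc : IsCopulaDensity c) {g : ℝ × ℝ → ℝ}
    (hg : ContinuousOn g unitSquare) :
    IntegrableOn (fun p : ℝ × ℝ => g p * c p.1 p.2) unitSquare := by
  obtain ⟨C, hC⟩ := isCompact_unitSquare.exists_bound_of_continuousOn hg
  refine hc.integrableOn.bdd_mul (c := C) (hg.aestronglyMeasurable measurableSet_unitSquare) ?_
  filter_upwards [ae_restrict_mem measurableSet_unitSquare] with p hp using hC p hp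

lemma setIntegral_mul_mono (hc : IsCopulaDensity c) {f g : ℝ × ℝ → ℝ}
    (hf : ContinuousOn f unitSquare) (hg : ContinuousOn g unitSquare)
    (hle : ∀ p ∈ unitSquare, f p ≤ g p) :
    ∫ p in unitSquare, f p * c p.1 p.2 ≤ ∫ p in unitSquare, g p * c p.1 p.2 :=
  setIntegral_mono_on (hc.integrableOn_mul hf) (hc.integrableOn_mul hg) measurableSet_unitSquare
    fun p hp => mul_le_mul_of_nonneg_right (hle p hp) (hc.2.1 _ hp.1 _ hp.2)

lemma integral_fst_mul (hc : IsCopulaDensity c) {φ : ℝ → ℝ}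
    (hφ : ContinuousOn φ (Icc 0 1)) :
    ∫ p in unitSquare, φ p.1 * c p.1 p.2 = ∫ u in Icc 0 1, φ u := by
  have hint := hc.integrableOn_mul (continuousOn_unitSquare_fst hφ)
  rw [IntegrableOn, volume_restrict_unitSquare] at hint
  rw [volume_restrict_unitSquare, integral_prod _ hint]
  refine integral_congr_ae ?_
  filter_upwards [hc.2.2.2.1] with u hu
  rw [integral_const_mul, hu, mul_one]

lemma integral_snd_mul (hc : IsCopulaDensity c) {ψ : ℝ → ℝ}
    (hψ : ContinuousOn ψ (Icc 0 1)) :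
    ∫ p in unitSquare, ψ p.2 * c p.1 p.2 = ∫ v in Icc 0 1, ψ v := by
  have hint := hc.integrableOn_mul (continuousOn_unitSquare_snd hψ)
  rw [IntegrableOn, volume_restrict_unitSquare] at hint
  rw [volume_restrict_unitSquare, integral_prod_symm _ hint]
  refine integral_congr_ae ?_
  filter_upwards [hc.2.2.2.2] with v hv
  rw [integral_const_mul, hv, mul_one]

lemma integral_add_mul (hc : IsCopulaDensity c) {φ ψ : ℝ → ℝ}
    (hφ : ContinuousOn φ (Icc 0 1)) (hψ : ContinuousOn ψ (Icc 0 1)) :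
    ∫ p in unitSquare, (φ p.1 + ψ p.2) * c p.1 p.2 =
      (∫ u in Icc 0 1, φ u) + ∫ v in Icc 0 1, ψ v := by
  simp_rw [add_mul]
  rw [integral_add (hc.integrableOn_mul (continuousOn_unitSquare_fst hφ))
    (hc.integrableOn_mul (continuousOn_unitSquare_snd hψ)),
    hc.integral_fst_mul hφ, hc.integral_snd_mul hψ]

lemma add_le_integral_mul (hc : IsCopulaDensity c) {φ ψ : ℝ → ℝ} {g : ℝ × ℝ → ℝ}
    (hφ : ContinuousOn φ (Icc 0 1)) (hψ : ContinuousOn ψ (Icc 0 1))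
    (hg : ContinuousOn g unitSquare) (hle : ∀ p ∈ unitSquare, φ p.1 + ψ p.2 ≤ g p) :
    (∫ u in Icc 0 1, φ u) + (∫ v in Icc 0 1, ψ v) ≤ ∫ p in unitSquare, g p * c p.1 p.2 := by
  rw [← hc.integral_add_mul hφ hψ]
  exact hc.setIntegral_mul_mono
    ((continuousOn_unitSquare_fst hφ).add (continuousOn_unitSquare_snd hψ)) hg hle

lemma integral_mul_le_add (hc : IsCopulaDensity c) {φ ψ : ℝ → ℝ} {g : ℝ × ℝ → ℝ}
    (hφ : ContinuousOn φ (Icc 0 1)) (hψ : ContinuousOn ψ (Icc 0 1))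
    (hg : ContinuousOn g unitSquare) (hle : ∀ p ∈ unitSquare, g p ≤ φ p.1 + ψ p.2) :
    ∫ p in unitSquare, g p * c p.1 p.2 ≤ (∫ u in Icc 0 1, φ u) + (∫ v in Icc 0 1, ψ v) := by
  rw [← hc.integral_add_mul hφ hψ]
  exact hc.setIntegral_mul_mono hg
    ((continuousOn_unitSquare_fst hφ).add (continuousOn_unitSquare_snd hψ)) hle

end IsCopulaDensity

/-- Its derivative is `∂ᵤ (u²v²)` at `v = 1 - u` and `blestPotential u + blestPotential (1 - u)
= u²(1 - u)²`, so `u²v² - blestPotential u - blestPotential v` vanishes to second order on the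
antidiagonal. -/
noncomputable def blestPotential (t : ℝ) : ℝ := t ^ 2 - 4 / 3 * t ^ 3 + t ^ 4 / 2 - 1 / 12

lemma blestPotential_add_le {u v : ℝ} (hu : u ∈ Icc (0 : ℝ) 1) (hv : v ∈ Icc (0 : ℝ) 1) :
    blestPotential u + blestPotential v ≤ u ^ 2 * v ^ 2 := by
  obtain ⟨hu0, hu1⟩ := hu
  obtain ⟨hv0, hv1⟩ := hv
  have hfactor : u ^ 2 * v ^ 2 - (blestPotential u + blestPotential v) =
      (u + v - 1) ^ 2 * (1 / 6 + (u + v) / 3 - (u - v) ^ 2 / 2) := by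
    unfold blestPotential; ring
  have hq : 0 ≤ 1 / 6 + (u + v) / 3 - (u - v) ^ 2 / 2 := by
    nlinarith [mul_nonneg hu0 hv0, mul_nonneg (sub_nonneg.2 hu1) (sub_nonneg.2 hv1),
      mul_nonneg hu0 (sub_nonneg.2 hv1), mul_nonneg hv0 (sub_nonneg.2 hu1)]
  linarith [mul_nonneg (sq_nonneg (u + v - 1)) hq]

lemma integral_blestPotential : ∫ t in Icc (0 : ℝ) 1, blestPotential t = 1 / 60 := by
  rw [integral_Icc_eq_integral_Ioc, ← intervalIntegral.integral_of_le zero_le_one,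
    intervalIntegral.integral_eq_sub_of_hasDerivAt
      (f := fun t : ℝ => t ^ 3 / 3 - t ^ 4 / 3 + t ^ 5 / 10 - t / 12)]
  · norm_num
  · intro t _
    refine (((((hasDerivAt_pow 3 t).div_const 3).sub ((hasDerivAt_pow 4 t).div_const 3)).add
      ((hasDerivAt_pow 5 t).div_const 10)).sub ((hasDerivAt_id t).div_const 12)).congr_deriv ?_
    norm_num [blestPotential]
    ring
  · exact (by unfold blestPotential; fun_prop : Continuous blestPotential).intervalIntegrable _ _

lemma integral_pow_four_div_two : ∫ t in Icc (0 : ℝ) 1, t ^ 4 / 2 = 1 / 10 := by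
  rw [integral_Icc_eq_integral_Ioc, ← intervalIntegral.integral_of_le zero_le_one]
  norm_num [integral_pow]

namespace IsCopulaDensity

variable {c : ℝ → ℝ → ℝ}

lemma one_div_thirty_le_integral_sq_mul_sq (hc : IsCopulaDensity c) :
    1 / 30 ≤ ∫ p in unitSquare, p.1 ^ 2 * p.2 ^ 2 * c p.1 p.2 := by
  have hφ : ContinuousOn blestPotential (Icc 0 1) := by
    unfold blestPotential; fun_prop
  have h := hc.add_le_integral_mul hφ hφ (g := fun p => p.1 ^ 2 * p.2 ^ 2) (by fun_prop)
    fun p hp => blestPotential_add_le hp.1 hp.2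
  rw [integral_blestPotential] at h
  linarith

lemma integral_sq_mul_sq_le_one_div_five (hc : IsCopulaDensity c) :
    ∫ p in unitSquare, p.1 ^ 2 * p.2 ^ 2 * c p.1 p.2 ≤ 1 / 5 := by
  have hφ : ContinuousOn (fun t : ℝ => t ^ 4 / 2) (Icc 0 1) := by fun_prop
  have h := hc.integral_mul_le_add hφ hφ (g := fun p => p.1 ^ 2 * p.2 ^ 2) (by fun_prop)
    fun p _ => by nlinarith [two_mul_le_add_sq (p.1 ^ 2) (p.2 ^ 2)]
  rw [integral_pow_four_div_two] at h
  linarith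

end IsCopulaDensity

/-- For a copula density `c`, the third Blest measure
`η = 6 ∫₀¹∫₀¹ u² v² c(u,v) du dv − 1/5` satisfies `0 ≤ η ≤ 1`. -/
theorem blest_III_bounds (c : ℝ → ℝ → ℝ) (hc : IsCopulaDensity c) :
    0 ≤ 6 * (∫ p in unitSquare, p.1 ^ 2 * p.2 ^ 2 * c p.1 p.2) - 1 / 5 ∧
    6 * (∫ p in unitSquare, p.1 ^ 2 * p.2 ^ 2 * c p.1 p.2) - 1 / 5 ≤ 1 := by
  have hlow := hc.one_div_thirty_le_integral_sq_mul_sq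
  have hhigh := hc.integral_sq_mul_sq_le_one_div_five
  constructor <;> linarith
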